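/- For every m ≥ 1, F(A,m) = F(B,m); that is, the union over all n of the sets of length-m sub-words of words in A_n equals the union over all n of the sets of length-m sub-words of words in B_n. -/
import Mathlib


/-- The two-letter alphabet. -/
inductive Letter : Type
  | a : Letter
  | b : Letter
deriving DecidableEq

/-- A word is a finite sequence of letters. -/
abbrev Word := List Letter

/-- Concatenation set `UV = {uv : u ∈ U, v ∈ V}`. -/
def concatSet (U V : Set Word) : Set Word := {w | ∃ u ∈ U, ∃ v ∈ V, w = u ++ v}

mutual
  /-- The sets `A_n` of inflated words (indexed so that `Aset 1 = {a}`). -/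
  def Aset : ℕ → Set Word
    | 0 => ∅
    | 1 => {[Letter.a]}
    | n + 2 => concatSet (Bset (n + 1)) (concatSet (Aset (n + 1)) (Aset (n + 1)))
  /-- The sets `B_n` of inflated words (indexed so that `Bset 1 = {b}`). -/
  def Bset : ℕ → Set Word
    | 0 => ∅
    | 1 => {[Letter.b]}
    | n + 2 => concatSet (Aset (n + 1)) (Bset (n + 1)) ∪ concatSet (Bset (n + 1)) (Aset (n + 1))
end

/-- The sub-word `w[a,b] = w_a w_{a+1} … w_b` (1-indexed). -/
def wordSlice (w : Word) (i j : ℕ) : Word := (w.drop (i - 1)).take (j - i + 1)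

/-- `W[a,b] = {w[a,b] : w ∈ W}`. -/
def setSlice (W : Set Word) (i j : ℕ) : Set Word := {x | ∃ w ∈ W, x = wordSlice w i j}

/-- `x` is a sub-word (contiguous factor) of `w`. -/
def IsFactor (x w : Word) : Prop := ∃ u v : Word, w = u ++ x ++ v

/-- `F(S, m)`: the set of all sub-words of length `m` of words in `S`. -/
def FactorSet (S : Set Word) (m : ℕ) : Set Word :=
  {x | x.length = m ∧ ∃ w ∈ S, IsFactor x w}

/-- `F(A, m) = ⋃_{n ≥ 1} F(A_n, m)`. -/
def FA (m : ℕ) : Set Word := ⋃ n ∈ {n : ℕ | 1 ≤ n}, FactorSet (Aset n) m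

/-- `F(B, m) = ⋃_{n ≥ 1} F(B_n, m)`. -/
def FB (m : ℕ) : Set Word := ⋃ n ∈ {n : ℕ | 1 ≤ n}, FactorSet (Bset n) m

/-- The golden mean `τ = (1 + √5)/2`. -/
noncomputable def tau : ℝ := (1 + Real.sqrt 5) / 2

lemma nonempty_AB : ∀ n, 1 ≤ n → (Aset n).Nonempty ∧ (Bset n).Nonempty := by
  intro n
  induction n with
  | zero => omega
  | succ k ih =>
    intro _
    match k with
    | 0 =>
      constructor
      · exact ⟨[Letter.a], rfl⟩
      · exact ⟨[Letter.b], rfl⟩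
    | j + 1 =>
      obtain ⟨⟨u, hu⟩, ⟨v, hv⟩⟩ := ih (by omega)
      constructor
      · exact ⟨v ++ (u ++ u), v, hv, u ++ u, ⟨u, hu, u, hu, rfl⟩, rfl⟩
      · exact ⟨u ++ v, Or.inl ⟨u, hu, v, hv, rfl⟩⟩

lemma factor_append_left (x w t : Word) (h : IsFactor x w) : IsFactor x (w ++ t) := by
  obtain ⟨u, v, rfl⟩ := h
  exact ⟨u, v ++ t, by simp⟩

lemma factor_append_right (x w t : Word) (h : IsFactor x w) : IsFactor x (t ++ w) := by
  obtain ⟨u, v, rfl⟩ := h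
  exact ⟨t ++ u, v, by simp⟩

theorem FA_eq_FB (m : ℕ) (hm : 1 ≤ m) : FA m = FB m := by
  ext x
  simp only [FA, FB, Set.mem_iUnion, Set.mem_setOf_eq]
  constructor
  · rintro ⟨n, hn, hlen, w, hw, hf⟩
    obtain ⟨k, rfl⟩ : ∃ k, n = k + 1 := ⟨n - 1, by omega⟩
    obtain ⟨-, v, hv⟩ := nonempty_AB (k + 1) hn
    refine ⟨k + 2, by omega, hlen, w ++ v, ?_, factor_append_left x w v hf⟩
    show w ++ v ∈ Bset (k + 2)
    exact Or.inl ⟨w, hw, v, hv, rfl⟩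
  · rintro ⟨n, hn, hlen, w, hw, hf⟩
    obtain ⟨k, rfl⟩ : ∃ k, n = k + 1 := ⟨n - 1, by omega⟩
    obtain ⟨⟨u, hu⟩, -⟩ := nonempty_AB (k + 1) hn
    refine ⟨k + 2, by omega, hlen, w ++ (u ++ u), ?_, factor_append_left x w (u ++ u) hf⟩
    show w ++ (u ++ u) ∈ Aset (k + 2)
    exact ⟨w, hw, u ++ u, ⟨u, hu, u, hu, rfl⟩, rfl⟩
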